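/- arXiv:math/0308160 — 6 statements merged into one kernel-verified Lean document; each statement's English description precedes it below -/
import Mathlib

section
/- Define bilinear maps l2 : X_p ⊗ X_q → X_{p+q} for all bidegrees (p, q) recursively by: l2 := l̃2 in bidegree (0,0), and l2(x, y) := −s( l2(l1 x, y) + (−1)^p l2(x, l1 y) ) for x ∈ X_p, y ∈ X_q with p + q ≥ 1, where terms involving l1 applied to a degree-0 argument are omitted (l1 = 0 on X_0) and l2 is extended with graded skew-symmetry. Then l2 vanishes identically on X_p ⊗ X_q whenever p + q ≥ 2; that is, the recursively defined l2 is zero in total degree greater than 1. -/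
/-- The bilinear maps l2 on X p ⊗ X q, defined recursively by
l2 := l̃2 in bidegree (0,0) and l2(x,y) := -s( l2(l1 x, y) + (-1)^p l2(x, l1 y) )
in total degree ≥ 1 (with l1 = 0 on degree-0 arguments and graded
skew-symmetric extension), vanish identically whenever p + q ≥ 2.
The grading is internal: M = ⊕ₙ X n. -/
theorem recursive_l2_vanishes_in_total_degree_ge_two
    (𝕜 : Type*) [Field 𝕜]
    (M : Type*) [AddCommGroup M] [Module 𝕜 M]
    (X : ℕ → Submodule 𝕜 M)
    (hX : DirectSum.IsInternal X)
    (l1 : M →ₗ[𝕜] M)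
    (hl1_deg : ∀ n, ∀ x ∈ X (n + 1), l1 x ∈ X n)
    (hl1_zero : ∀ x ∈ X 0, l1 x = 0)
    (hl1sq : ∀ x : M, l1 (l1 x) = 0)
    (s : M →ₗ[𝕜] M)
    (hs_deg : ∀ n, ∀ x ∈ X n, s x ∈ X (n + 1))
    (p : M →ₗ[𝕜] M)
    (hp_deg : ∀ x ∈ X 0, p x ∈ X 0)
    (hp_im : ∀ f ∈ X 1, p (l1 f) = 0)
    (hps0 : ∀ x ∈ X 0, p x - x = l1 (s x))
    (hpsn : ∀ n, ∀ x ∈ X (n + 1), -x = l1 (s x) + s (l1 x))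
    (lt2 : M →ₗ[𝕜] M →ₗ[𝕜] M)
    (hlt2_deg : ∀ x ∈ X 0, ∀ y ∈ X 0, lt2 x y ∈ X 0)
    (hlt2_skew : ∀ x y : M, lt2 x y = -lt2 y x)
    (l2 : M →ₗ[𝕜] M →ₗ[𝕜] M)
    (hl2_base : ∀ x ∈ X 0, ∀ y ∈ X 0, l2 x y = lt2 x y)
    (hl2_rec : ∀ (a b : ℕ), 1 ≤ a + b → ∀ x ∈ X a, ∀ y ∈ X b,
      l2 x y = -(s (l2 (l1 x) y + ((-1 : 𝕜) ^ a) • l2 x (l1 y))))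
    (hl2_skew : ∀ (a b : ℕ), ∀ x ∈ X a, ∀ y ∈ X b,
      l2 y x = -(((-1 : 𝕜) ^ (a * b)) • l2 x y)) :
    ∀ (a b : ℕ), 2 ≤ a + b → ∀ x ∈ X a, ∀ y ∈ X b, l2 x y = 0 := by

  suffices H : ∀ n, ∀ a b : ℕ, a + b = n → 2 ≤ a + b → ∀ x ∈ X a, ∀ y ∈ X b, l2 x y = 0 by
    intro a b hab x hx y hy
    exact H (a + b) a b rfl hab x hx y hy
  intro n
  induction n using Nat.strong_induction_on with
  | _ n IH =>
    intro a b hab h2 x hx y hy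
    have h20 : ∀ x ∈ X 2, ∀ y ∈ X 0, l2 x y = 0 := by
      intro x hx y hy
      have hz : l2 (l1 x) y = 0 := by
        rw [hl2_rec 1 0 (by norm_num) (l1 x) (hl1_deg 1 x hx) y hy, hl1sq x,
          hl1_zero y hy]
        simp
      rw [hl2_rec 2 0 (by norm_num) x hx y hy, hz, hl1_zero y hy]
      simp
    rcases Nat.lt_or_ge n 3 with hn3 | hn3
    · have hn2 : a + b = 2 := by omega
      have ha : a = 0 ∨ a = 1 ∨ a = 2 := by omega
      rcases ha with rfl | rfl | rfl
      · -- a = 0, b = 2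
        have hb : b = 2 := by omega
        subst hb
        have := hl2_skew 2 0 y hy x hx
        rw [this, h20 y hy x hx]
        simp
      · -- a = 1, b = 1
        have hb : b = 1 := by omega
        subst hb
        have hA1 : l2 (l1 x) y = -(s (l2 (l1 x) (l1 y))) := by
          rw [hl2_rec 0 1 (by norm_num) (l1 x) (hl1_deg 0 x hx) y hy, hl1sq x]
          simp
        have hA2 : l2 x (l1 y) = -(s (l2 (l1 x) (l1 y))) := by
          rw [hl2_rec 1 0 (by norm_num) x hx (l1 y) (hl1_deg 0 y hy), hl1sq y]
          simp
        rw [hl2_rec 1 1 (by norm_num) x hx y hy, hA1, hA2]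
        simp
      · -- a = 2, b = 0
        have hb : b = 0 := by omega
        subst hb
        exact h20 x hx y hy
    · -- n ≥ 3
      have h1 : l2 (l1 x) y = 0 := by
        rcases Nat.eq_zero_or_pos a with rfl | ha
        · rw [hl1_zero x hx]; simp
        · obtain ⟨a', rfl⟩ := Nat.exists_eq_succ_of_ne_zero (by omega : a ≠ 0)
          exact IH (a' + b) (by omega) a' b rfl (by omega) (l1 x)
            (hl1_deg a' x hx) y hy
      have h2' : l2 x (l1 y) = 0 := by
        rcases Nat.eq_zero_or_pos b with rfl | hb
        · rw [hl1_zero y hy]; simp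
        · obtain ⟨b', rfl⟩ := Nat.exists_eq_succ_of_ne_zero (by omega : b ≠ 0)
          exact IH (a + b') (by omega) a b' rfl (by omega) x hx (l1 y)
            (hl1_deg b' y hy)
      rw [hl2_rec a b (by omega) x hx y hy, h1, h2']
      simp
end

section
/- Assume condition (i): l̃2(x, b) ∈ im(l1 : X_1 → X_0) for every x ∈ X_0 and every b ∈ im(l1). Define l2 recursively by l2 := l̃2 in bidegree (0,0) and l2(x, y) := −s( l2(l1 x, y) + (−1)^p l2(x, l1 y) ) for x ∈ X_p, y ∈ X_q with p + q ≥ 1 (terms with l1 applied to a degree-0 argument omitted, extended with graded skew-symmetry). Then l2 is a chain map: for all x ∈ X_p, y ∈ X_q, l1(l2(x, y)) = l2(l1 x, y) + (−1)^p l2(x, l1 y). -/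
/-- Under condition (i), the recursively defined l2 (l2 := l̃2 in
bidegree (0,0), l2(x,y) := -s( l2(l1 x, y) + (-1)^p l2(x, l1 y) ) in total
degree ≥ 1, extended with graded skew-symmetry) is a chain map:
l1(l2(x, y)) = l2(l1 x, y) + (-1)^p l2(x, l1 y) for x ∈ X p, y ∈ X q.
The grading is internal: M = ⊕ₙ X n. -/
theorem recursive_l2_is_chain_map
    (𝕜 : Type*) [Field 𝕜]
    (M : Type*) [AddCommGroup M] [Module 𝕜 M]
    (X : ℕ → Submodule 𝕜 M)
    (hX : DirectSum.IsInternal X)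
    (l1 : M →ₗ[𝕜] M)
    (hl1_deg : ∀ n, ∀ x ∈ X (n + 1), l1 x ∈ X n)
    (hl1_zero : ∀ x ∈ X 0, l1 x = 0)
    (hl1sq : ∀ x : M, l1 (l1 x) = 0)
    (s : M →ₗ[𝕜] M)
    (hs_deg : ∀ n, ∀ x ∈ X n, s x ∈ X (n + 1))
    (p : M →ₗ[𝕜] M)
    (hp_deg : ∀ x ∈ X 0, p x ∈ X 0)
    (hp_im : ∀ f ∈ X 1, p (l1 f) = 0)
    (hps0 : ∀ x ∈ X 0, p x - x = l1 (s x))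
    (hpsn : ∀ n, ∀ x ∈ X (n + 1), -x = l1 (s x) + s (l1 x))
    (lt2 : M →ₗ[𝕜] M →ₗ[𝕜] M)
    (hlt2_deg : ∀ x ∈ X 0, ∀ y ∈ X 0, lt2 x y ∈ X 0)
    (hlt2_skew : ∀ x y : M, lt2 x y = -lt2 y x)
    (l2 : M →ₗ[𝕜] M →ₗ[𝕜] M)
    (hl2_base : ∀ x ∈ X 0, ∀ y ∈ X 0, l2 x y = lt2 x y)
    (hl2_rec : ∀ (a b : ℕ), 1 ≤ a + b → ∀ x ∈ X a, ∀ y ∈ X b,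
      l2 x y = -(s (l2 (l1 x) y + ((-1 : 𝕜) ^ a) • l2 x (l1 y))))
    (hl2_skew : ∀ (a b : ℕ), ∀ x ∈ X a, ∀ y ∈ X b,
      l2 y x = -(((-1 : 𝕜) ^ (a * b)) • l2 x y))
    (hcondi : ∀ x ∈ X 0, ∀ f ∈ X 1, ∃ g ∈ X 1, l1 g = lt2 x (l1 f)) :
    ∀ (a b : ℕ), ∀ x ∈ X a, ∀ y ∈ X b,
      l1 (l2 x y) = l2 (l1 x) y + ((-1 : 𝕜) ^ a) • l2 x (l1 y) := by
  -- degree lemma: l2 maps X a × X b into X (a+b)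
  have hdeg : ∀ n, ∀ a b : ℕ, a + b = n → ∀ x ∈ X a, ∀ y ∈ X b, l2 x y ∈ X n := by
    intro n
    induction n using Nat.strong_induction_on with
    | _ n ih =>
      intro a b hab x hx y hy
      rcases Nat.eq_zero_or_pos n with hn | hn
      · subst hn
        obtain ⟨rfl, rfl⟩ : a = 0 ∧ b = 0 := by omega
        rw [hl2_base x hx y hy]
        exact hlt2_deg x hx y hy
      · obtain ⟨m, rfl⟩ : ∃ m, n = m + 1 := ⟨n - 1, by omega⟩
        rw [hl2_rec a b (by omega) x hx y hy]
        refine neg_mem (hs_deg m _ ?_)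
        refine add_mem ?_ (Submodule.smul_mem _ _ ?_)
        · rcases a with _ | a'
          · simp [hl1_zero x hx]
          · exact ih m (by omega) a' b (by omega) _ (hl1_deg a' x hx) y hy
        · rcases b with _ | b'
          · simp [hl1_zero y hy]
          · exact ih m (by omega) a b' (by omega) x hx _ (hl1_deg b' y hy)
  have key : ∀ n, ∀ a b : ℕ, a + b = n → ∀ x ∈ X a, ∀ y ∈ X b,
      l1 (l2 x y) = l2 (l1 x) y + ((-1 : 𝕜) ^ a) • l2 x (l1 y) := by
    intro n
    induction n using Nat.strong_induction_on with
    | _ n ih =>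
      intro a b hab x hx y hy
      rcases Nat.eq_zero_or_pos n with hn | hn
      · subst hn
        obtain ⟨rfl, rfl⟩ : a = 0 ∧ b = 0 := by omega
        have h0 : l2 x y ∈ X 0 := by rw [hl2_base x hx y hy]; exact hlt2_deg x hx y hy
        simp [hl1_zero _ h0, hl1_zero x hx, hl1_zero y hy]
      · obtain ⟨m, rfl⟩ : ∃ m, n = m + 1 := ⟨n - 1, by omega⟩
        -- the two terms
        have hC1 : l2 (l1 x) y ∈ X m := by
          rcases a with _ | a'
          · simp [hl1_zero x hx]
          · exact hdeg m a' b (by omega) _ (hl1_deg a' x hx) y hy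
        have hC2 : l2 x (l1 y) ∈ X m := by
          rcases b with _ | b'
          · simp [hl1_zero y hy]
          · exact hdeg m a b' (by omega) x hx _ (hl1_deg b' y hy)
        set T : M := l2 (l1 x) (l1 y) with hT
        have e1 : l1 (l2 (l1 x) y) = -((-1 : 𝕜) ^ a • T) := by
          rcases a with _ | a'
          · simp [hl1_zero x hx, hT]
          · rw [ih m (by omega) a' b (by omega) _ (hl1_deg a' x hx) y hy, hl1sq x]
            simp [hT, pow_succ]
        have e2 : l1 (l2 x (l1 y)) = T := by
          rcases b with _ | b'
          · simp [hl1_zero y hy, hT]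
          · rw [ih m (by omega) a b' (by omega) x hx _ (hl1_deg b' y hy), hl1sq y]
            simp [hT]
        set C : M := l2 (l1 x) y + ((-1 : 𝕜) ^ a) • l2 x (l1 y) with hCdef
        have hC : C ∈ X m := add_mem hC1 (Submodule.smul_mem _ _ hC2)
        have hl1C : l1 C = 0 := by
          rw [hCdef, map_add, map_smul, e1, e2]
          simp
        rw [hl2_rec a b (by omega) x hx y hy, map_neg, ← hCdef]
        rcases m with _ | m'
        · -- C ∈ X 0, need p C = 0
          have hpC : p C = 0 := by
            obtain ⟨rfl, rfl⟩ | ⟨rfl, rfl⟩ : (a = 1 ∧ b = 0) ∨ (a = 0 ∧ b = 1) := by omega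
            · have ht2 : l2 x (l1 y) = 0 := by simp [hl1_zero y hy]
              have ht1 : l2 (l1 x) y = lt2 (l1 x) y := hl2_base _ (hl1_deg 0 x hx) y hy
              obtain ⟨g, hg, hgeq⟩ := hcondi y hy x hx
              have : l2 (l1 x) y = -(l1 g) := by
                rw [ht1, hlt2_skew, hgeq]
              rw [hCdef, map_add, map_smul, this, ht2, map_neg, hp_im g hg]
              simp
            · have ht1 : l2 (l1 x) y = 0 := by simp [hl1_zero x hx]
              have ht2 : l2 x (l1 y) = lt2 x (l1 y) := hl2_base x hx _ (hl1_deg 0 y hy)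
              obtain ⟨g, hg, hgeq⟩ := hcondi x hx y hy
              rw [hCdef, map_add, map_smul, ht1, ht2, ← hgeq, hp_im g hg]
              simp
          have := hps0 C hC
          rw [hpC] at this
          rw [show l1 (s C) = -C by linear_combination (norm := module) -this]
          simp
        · have := hpsn m' C hC
          rw [hl1C, map_zero, add_zero] at this
          rw [← this]
          simp
  intro a b x hx y hy
  exact key (a + b) a b rfl x hx y hy
end

section
/- Let J(x, y, z) := l̃2(l̃2(x, y), z) − l̃2(l̃2(x, z), y) + l̃2(l̃2(y, z), x) denote the Jacobiator of l̃2, and assume condition (ii): J(x, y, z) ∈ im(l1 : X_1 → X_0) for all x, y, z ∈ X_0. Define l3 : X_0 × X_0 × X_0 → X_1 by l3(x, y, z) := s(J(x, y, z)). Then l1(l3(x, y, z)) = −J(x, y, z) for all x, y, z ∈ X_0; that is, the sh-Lie relation l1 l3 + l2 l2 = 0 holds in degree 0. -/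
/-- With Jacobiator J(x,y,z) := l̃2(l̃2(x,y),z) - l̃2(l̃2(x,z),y)
+ l̃2(l̃2(y,z),x) assumed to be a boundary (condition (ii)), the map
l3(x,y,z) := s(J(x,y,z)) satisfies l1(l3(x,y,z)) = -J(x,y,z); i.e. the sh-Lie
relation l1 l3 + l2 l2 = 0 holds in degree 0. -/
theorem l1_l3_plus_l2_l2_degree_zero
    (𝕜 : Type*) [Field 𝕜]
    (X : ℕ → Type*) [∀ n, AddCommGroup (X n)] [∀ n, Module 𝕜 (X n)]
    (l1 : ∀ n, X (n + 1) →ₗ[𝕜] X n)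
    (hl1sq : ∀ n (x : X (n + 2)), l1 n (l1 (n + 1) x) = 0)
    (s : ∀ n, X n →ₗ[𝕜] X (n + 1))
    (p : X 0 →ₗ[𝕜] X 0)
    (hp_im : ∀ f : X 1, p (l1 0 f) = 0)
    (hps0 : ∀ x : X 0, p x - x = l1 0 (s 0 x))
    (hpsn : ∀ n (x : X (n + 1)), -x = l1 (n + 1) (s (n + 1) x) + s n (l1 n x))
    (lt2 : X 0 →ₗ[𝕜] X 0 →ₗ[𝕜] X 0)
    (hlt2_skew : ∀ a b : X 0, lt2 a b = -lt2 b a)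
    (hcondii : ∀ x y z : X 0, ∃ f : X 1,
      l1 0 f = lt2 (lt2 x y) z - lt2 (lt2 x z) y + lt2 (lt2 y z) x)
    (l3 : X 0 → X 0 → X 0 → X 1)
    (hl3 : ∀ x y z : X 0,
      l3 x y z = s 0 (lt2 (lt2 x y) z - lt2 (lt2 x z) y + lt2 (lt2 y z) x)) :
    ∀ x y z : X 0,
      l1 0 (l3 x y z) = -(lt2 (lt2 x y) z - lt2 (lt2 x z) y + lt2 (lt2 y z) x) := by
  intro x y z
  obtain ⟨f, hf⟩ := hcondii x y z
  rw [hl3, ← hps0, ← hf, hp_im]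
  simp
end

section
/- Assume conditions (i) and (ii): l̃2(x, b) ∈ im(l1) for every x ∈ X_0 and b ∈ im(l1), and the Jacobiator J(x, y, z) := l̃2(l̃2(x, y), z) − l̃2(l̃2(x, z), y) + l̃2(l̃2(y, z), x) lies in im(l1) for all x, y, z ∈ X_0. Define l2 in total degree 1 by l2(f, a) := −s(l̃2(l1 f, a)) for f ∈ X_1, a ∈ X_0 (extended skew-symmetrically by l2(a, f) := −l2(f, a), with l2 := l̃2 in degree 0), and define l3 in degree 0 by l3(x, y, z) := s(J(x, y, z)). Then for all f ∈ X_1 and a, b ∈ X_0: l2(l2(f, a), b) − l2(l2(f, b), a) + l2(l̃2(a, b), f) + l3(l1 f, a, b) = 0; that is, the combination l2 l2 + l3 l1 vanishes identically on X_1 ⊗ X_0 ⊗ X_0. -/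
/-- Under conditions (i) and (ii), with l2 in total degree 1
given by l2(f, a) := -s(l̃2(l1 f, a)) (extended skew-symmetrically, with
l2 := l̃2 in degree 0) and l3(x,y,z) := s(J(x,y,z)), the combination
l2 l2 + l3 l1 vanishes identically on X 1 ⊗ X 0 ⊗ X 0. -/
theorem l2l2_plus_l3l1_vanishes_on_X1_X0_X0
    (𝕜 : Type*) [Field 𝕜]
    (X : ℕ → Type*) [∀ n, AddCommGroup (X n)] [∀ n, Module 𝕜 (X n)]
    (l1 : ∀ n, X (n + 1) →ₗ[𝕜] X n)
    (hl1sq : ∀ n (x : X (n + 2)), l1 n (l1 (n + 1) x) = 0)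
    (s : ∀ n, X n →ₗ[𝕜] X (n + 1))
    (p : X 0 →ₗ[𝕜] X 0)
    (hp_im : ∀ f : X 1, p (l1 0 f) = 0)
    (hps0 : ∀ x : X 0, p x - x = l1 0 (s 0 x))
    (hpsn : ∀ n (x : X (n + 1)), -x = l1 (n + 1) (s (n + 1) x) + s n (l1 n x))
    (lt2 : X 0 →ₗ[𝕜] X 0 →ₗ[𝕜] X 0)
    (hlt2_skew : ∀ a b : X 0, lt2 a b = -lt2 b a)
    (hcondi : ∀ (x b : X 0), (∃ f : X 1, l1 0 f = b) → ∃ g : X 1, l1 0 g = lt2 x b)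
    (hcondii : ∀ x y z : X 0, ∃ f : X 1,
      l1 0 f = lt2 (lt2 x y) z - lt2 (lt2 x z) y + lt2 (lt2 y z) x)
    (l2a : X 1 → X 0 → X 1)
    (hl2a : ∀ (f : X 1) (a : X 0), l2a f a = -(s 0 (lt2 (l1 0 f) a)))
    (l2b : X 0 → X 1 → X 1)
    (hl2b : ∀ (a : X 0) (f : X 1), l2b a f = -(l2a f a))
    (l3 : X 0 → X 0 → X 0 → X 1)
    (hl3 : ∀ x y z : X 0,
      l3 x y z = s 0 (lt2 (lt2 x y) z - lt2 (lt2 x z) y + lt2 (lt2 y z) x)) :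
    ∀ (f : X 1) (a b : X 0),
      l2a (l2a f a) b - l2a (l2a f b) a + l2b (lt2 a b) f + l3 (l1 0 f) a b = 0 := by

  intro f a b
  have key : ∀ (g : X 1) (c : X 0), l1 0 (l2a g c) = lt2 (l1 0 g) c := by
    intro g c
    obtain ⟨w, hw⟩ := hcondi c (l1 0 g) ⟨g, rfl⟩
    have hp0 : p (lt2 (l1 0 g) c) = 0 := by
      rw [hlt2_skew (l1 0 g) c, ← hw]
      simp [hp_im w]
    rw [hl2a, map_neg, ← hps0, hp0]
    simp
  have e1 : l2a (l2a f a) b = -(s 0 (lt2 (lt2 (l1 0 f) a) b)) := by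
    rw [hl2a, key]
  have e2 : l2a (l2a f b) a = -(s 0 (lt2 (lt2 (l1 0 f) b) a)) := by
    rw [hl2a, key]
  have e3 : l2b (lt2 a b) f = s 0 (lt2 (l1 0 f) (lt2 a b)) := by
    rw [hl2b, hl2a, neg_neg]
  rw [e1, e2, e3, hl3, hlt2_skew (l1 0 f) (lt2 a b)]
  simp only [map_sub, map_add, map_neg]
  abel
end

section
/- Assume conditions (i) and (ii): l̃2(x, b) ∈ im(l1) for every x ∈ X_0 and b ∈ im(l1), and the Jacobiator J(x, y, z) := l̃2(l̃2(x, y), z) − l̃2(l̃2(x, z), y) + l̃2(l̃2(y, z), x) lies in im(l1) for all x, y, z ∈ X_0. Define l2 recursively by l2 := l̃2 in degree 0 and l2 := −s ∘ l2 ∘ l1 in total degree ≥ 1 (with Koszul signs and graded skew-symmetry), define l3 := s ∘ J in degree 0, and define l3 recursively in total degree n ≥ 1 by l3 := s ∘ (l2 l2 + l3 ∘ l1), where l2 l2 denotes the sum over (2,1)-unshuffles with Koszul signs of l2(l2(·,·),·) and l3 ∘ l1 is l3 precomposed with the degree −1 derivation induced by l1 on the triple tensor product. Then l3 vanishes identically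 on X_p ⊗ X_q ⊗ X_r whenever p + q + r ≥ 1; that is, l3 = 0 in every positive total degree. -/
/-- Under conditions (i) and (ii), with l2 defined recursively
(l2 := l̃2 in degree 0, l2 := -s ∘ l2 ∘ l1 in total degree ≥ 1, with Koszul
signs and graded skew-symmetry) and l3 defined by l3 := s ∘ J in degree 0 and
recursively by l3 := s ∘ (l2 l2 + l3 ∘ l1) in total degree ≥ 1 (l2 l2 being
the signed sum over (2,1)-unshuffles of l2(l2(·,·),·) with Koszul signs, and
l3 ∘ l1 being l3 precomposed with the degree -1 derivation induced by l1 on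
the triple tensor product), the map l3 vanishes identically on X p ⊗ X q ⊗ X r
whenever p + q + r ≥ 1. The grading is internal: M = ⊕ₙ X n. -/
theorem recursive_l3_vanishes_in_positive_total_degree
    (𝕜 : Type*) [Field 𝕜]
    (M : Type*) [AddCommGroup M] [Module 𝕜 M]
    (X : ℕ → Submodule 𝕜 M)
    (hX : DirectSum.IsInternal X)
    (l1 : M →ₗ[𝕜] M)
    (hl1_deg : ∀ n, ∀ x ∈ X (n + 1), l1 x ∈ X n)
    (hl1_zero : ∀ x ∈ X 0, l1 x = 0)
    (hl1sq : ∀ x : M, l1 (l1 x) = 0)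
    (s : M →ₗ[𝕜] M)
    (hs_deg : ∀ n, ∀ x ∈ X n, s x ∈ X (n + 1))
    (p : M →ₗ[𝕜] M)
    (hp_deg : ∀ x ∈ X 0, p x ∈ X 0)
    (hp_im : ∀ f ∈ X 1, p (l1 f) = 0)
    (hps0 : ∀ x ∈ X 0, p x - x = l1 (s x))
    (hpsn : ∀ n, ∀ x ∈ X (n + 1), -x = l1 (s x) + s (l1 x))
    (lt2 : M →ₗ[𝕜] M →ₗ[𝕜] M)
    (hlt2_deg : ∀ x ∈ X 0, ∀ y ∈ X 0, lt2 x y ∈ X 0)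
    (hlt2_skew : ∀ x y : M, lt2 x y = -lt2 y x)
    (l2 : M →ₗ[𝕜] M →ₗ[𝕜] M)
    (hl2_base : ∀ x ∈ X 0, ∀ y ∈ X 0, l2 x y = lt2 x y)
    (hl2_rec : ∀ (a b : ℕ), 1 ≤ a + b → ∀ x ∈ X a, ∀ y ∈ X b,
      l2 x y = -(s (l2 (l1 x) y + ((-1 : 𝕜) ^ a) • l2 x (l1 y))))
    (hl2_skew : ∀ (a b : ℕ), ∀ x ∈ X a, ∀ y ∈ X b,
      l2 y x = -(((-1 : 𝕜) ^ (a * b)) • l2 x y))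
    (hcondi : ∀ x ∈ X 0, ∀ f ∈ X 1, ∃ g ∈ X 1, l1 g = lt2 x (l1 f))
    (hcondii : ∀ x ∈ X 0, ∀ y ∈ X 0, ∀ z ∈ X 0, ∃ f ∈ X 1,
      l1 f = lt2 (lt2 x y) z - lt2 (lt2 x z) y + lt2 (lt2 y z) x)
    (l3 : M →ₗ[𝕜] M →ₗ[𝕜] M →ₗ[𝕜] M)
    (hl3_base : ∀ x ∈ X 0, ∀ y ∈ X 0, ∀ z ∈ X 0,
      l3 x y z = s (lt2 (lt2 x y) z - lt2 (lt2 x z) y + lt2 (lt2 y z) x))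
    (hl3_rec : ∀ (a b c : ℕ), 1 ≤ a + b + c → ∀ x ∈ X a, ∀ y ∈ X b, ∀ z ∈ X c,
      l3 x y z = s (l2 (l2 x y) z - ((-1 : 𝕜) ^ (b * c)) • l2 (l2 x z) y
          + ((-1 : 𝕜) ^ (a * (b + c))) • l2 (l2 y z) x
          + l3 (l1 x) y z + ((-1 : 𝕜) ^ a) • l3 x (l1 y) z
          + ((-1 : 𝕜) ^ (a + b)) • l3 x y (l1 z))) :
    ∀ (a b c : ℕ), 1 ≤ a + b + c → ∀ x ∈ X a, ∀ y ∈ X b, ∀ z ∈ X c,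
      l3 x y z = 0 := by
  -- sign helper
  have h2 : ∀ k : ℕ, (-1:𝕜)^(k*2) = 1 := by
    intro k; rw [mul_comm, pow_mul, neg_one_sq, one_pow]
  -- degree of l2
  have deg_l2 : ∀ n a b, a + b = n → ∀ x ∈ X a, ∀ y ∈ X b, l2 x y ∈ X n := by
    intro n
    induction n using Nat.strong_induction_on with
    | _ n ih =>
      intro a b hab x hx y hy
      rcases n with _ | m
      · obtain ⟨rfl, rfl⟩ : a = 0 ∧ b = 0 := by omega
        rw [hl2_base x hx y hy]
        exact hlt2_deg x hx y hy
      · rw [hl2_rec a b (by omega) x hx y hy]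
        apply neg_mem
        apply hs_deg m
        apply add_mem
        · rcases a with _ | a'
          · rw [hl1_zero x hx]
            simp only [map_zero, LinearMap.zero_apply]
            exact zero_mem _
          · have := ih (a' + b) (by omega) a' b rfl (l1 x) (hl1_deg a' x hx) y hy
            exact (show a' + b = m by omega) ▸ this
        · apply Submodule.smul_mem
          rcases b with _ | b'
          · rw [hl1_zero y hy]
            simp only [map_zero]
            exact zero_mem _
          · have := ih (a + b') (by omega) a b' rfl x hx (l1 y) (hl1_deg b' y hy)
            exact (show a + b' = m by omega) ▸ this
  -- chain map property of l2
  have chain : ∀ n a b, a + b = n → ∀ x ∈ X a, ∀ y ∈ X b,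
      l1 (l2 x y) = l2 (l1 x) y + ((-1:𝕜)^a) • l2 x (l1 y) := by
    intro n
    induction n using Nat.strong_induction_on with
    | _ n ih =>
      intro a b hab x hx y hy
      rcases n with _ | m
      · obtain ⟨rfl, rfl⟩ : a = 0 ∧ b = 0 := by omega
        rw [hl1_zero _ (deg_l2 0 0 0 rfl x hx y hy), hl1_zero x hx, hl1_zero y hy]
        simp
      rcases m with _ | m'
      · -- total degree 1
        obtain ⟨rfl, rfl⟩ | ⟨rfl, rfl⟩ : (a = 0 ∧ b = 1) ∨ (a = 1 ∧ b = 0) := by omega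
        · have hly : l1 y ∈ X 0 := hl1_deg 0 y hy
          have hrec := hl2_rec 0 1 (by omega) x hx y hy
          rw [hl1_zero x hx] at hrec ⊢
          simp only [map_zero, LinearMap.zero_apply, zero_add, pow_zero, one_smul] at hrec ⊢
          have hu : l2 x (l1 y) ∈ X 0 := deg_l2 0 0 0 rfl x hx (l1 y) hly
          have hpu : p (l2 x (l1 y)) = 0 := by
            rw [hl2_base x hx (l1 y) hly]
            obtain ⟨g, hg, hgeq⟩ := hcondi x hx y hy
            rw [← hgeq]
            exact hp_im g hg
          have hps := hps0 _ hu
          rw [hpu, zero_sub] at hps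
          rw [hrec, map_neg, ← hps, neg_neg]
        · have hlx : l1 x ∈ X 0 := hl1_deg 0 x hx
          have hrec := hl2_rec 1 0 (by omega) x hx y hy
          rw [hl1_zero y hy] at hrec ⊢
          simp only [map_zero, smul_zero, add_zero] at hrec ⊢
          have hu : l2 (l1 x) y ∈ X 0 := deg_l2 0 0 0 rfl (l1 x) hlx y hy
          have hpu : p (l2 (l1 x) y) = 0 := by
            rw [hl2_base (l1 x) hlx y hy, hlt2_skew, map_neg]
            obtain ⟨g, hg, hgeq⟩ := hcondi y hy x hx
            rw [← hgeq, hp_im g hg, neg_zero]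
          have hps := hps0 _ hu
          rw [hpu, zero_sub] at hps
          rw [hrec, map_neg, ← hps, neg_neg]
      · -- total degree ≥ 2
        have hA : l1 (l2 (l1 x) y) = ((-1:𝕜)^(a-1)) • l2 (l1 x) (l1 y) := by
          rcases a with _ | a'
          · rw [hl1_zero x hx]; simp
          · rw [ih (a' + b) (by omega) a' b rfl (l1 x) (hl1_deg a' x hx) y hy, hl1sq x]
            simp
        have hB : l1 (l2 x (l1 y)) = l2 (l1 x) (l1 y) := by
          rcases b with _ | b'
          · rw [hl1_zero y hy]; simp
          · rw [ih (a + b') (by omega) a b' rfl x hx (l1 y) (hl1_deg b' y hy), hl1sq y]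
            simp
        have hu1 : l2 (l1 x) y ∈ X (m' + 1) := by
          rcases a with _ | a'
          · rw [hl1_zero x hx]
            simp only [map_zero, LinearMap.zero_apply]
            exact zero_mem _
          · have := deg_l2 (a' + b) a' b rfl (l1 x) (hl1_deg a' x hx) y hy
            exact (show a' + b = m' + 1 by omega) ▸ this
        have hu2 : l2 x (l1 y) ∈ X (m' + 1) := by
          rcases b with _ | b'
          · rw [hl1_zero y hy]
            simp only [map_zero]
            exact zero_mem _
          · have := deg_l2 (a + b') a b' rfl x hx (l1 y) (hl1_deg b' y hy)
            exact (show a + b' = m' + 1 by omega) ▸ this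
        have hu : l2 (l1 x) y + ((-1:𝕜)^a) • l2 x (l1 y) ∈ X (m' + 1) :=
          add_mem hu1 (Submodule.smul_mem _ _ hu2)
        have hl1u : l1 (l2 (l1 x) y + ((-1:𝕜)^a) • l2 x (l1 y)) = 0 := by
          rw [map_add, map_smul, hA, hB]
          rcases a with _ | a'
          · rw [hl1_zero x hx]
            simp
          · simp only [Nat.add_sub_cancel]
            match_scalars <;> ring
        have hrec := hl2_rec a b (by omega) x hx y hy
        have hps := hpsn m' _ hu
        rw [hl1u, map_zero, add_zero] at hps
        rw [hrec, map_neg, ← hps, neg_neg]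
  -- recursion for the l2-Jacobiator
  have jac_rec : ∀ a b c, 1 ≤ a + b + c → ∀ x ∈ X a, ∀ y ∈ X b, ∀ z ∈ X c,
      l2 (l2 x y) z - ((-1:𝕜)^(b*c)) • l2 (l2 x z) y + ((-1:𝕜)^(a*(b+c))) • l2 (l2 y z) x
      = -(s ((l2 (l2 (l1 x) y) z - ((-1:𝕜)^(b*c)) • l2 (l2 (l1 x) z) y
              + ((-1:𝕜)^((a-1)*(b+c))) • l2 (l2 y z) (l1 x))
          + ((-1:𝕜)^a) • (l2 (l2 x (l1 y)) z - ((-1:𝕜)^((b-1)*c)) • l2 (l2 x z) (l1 y)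
              + ((-1:𝕜)^(a*((b-1)+c))) • l2 (l2 (l1 y) z) x)
          + ((-1:𝕜)^(a+b)) • (l2 (l2 x y) (l1 z) - ((-1:𝕜)^(b*(c-1))) • l2 (l2 x (l1 z)) y
              + ((-1:𝕜)^(a*(b+(c-1)))) • l2 (l2 y (l1 z)) x))) := by
    intro a b c h x hx y hy z hz
    have eA : l2 (l2 x y) z = -(s (l2 (l2 (l1 x) y) z + ((-1:𝕜)^a) • l2 (l2 x (l1 y)) z
        + ((-1:𝕜)^(a+b)) • l2 (l2 x y) (l1 z))) := by
      rw [hl2_rec (a+b) c (by omega) _ (deg_l2 (a+b) a b rfl x hx y hy) z hz,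
        chain (a+b) a b rfl x hx y hy]
      simp only [map_add, map_smul, LinearMap.add_apply, LinearMap.smul_apply]
    have eB : l2 (l2 x z) y = -(s (l2 (l2 (l1 x) z) y + ((-1:𝕜)^a) • l2 (l2 x (l1 z)) y
        + ((-1:𝕜)^(a+c)) • l2 (l2 x z) (l1 y))) := by
      rw [hl2_rec (a+c) b (by omega) _ (deg_l2 (a+c) a c rfl x hx z hz) y hy,
        chain (a+c) a c rfl x hx z hz]
      simp only [map_add, map_smul, LinearMap.add_apply, LinearMap.smul_apply]
    have eC : l2 (l2 y z) x = -(s (l2 (l2 (l1 y) z) x + ((-1:𝕜)^b) • l2 (l2 y (l1 z)) x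
        + ((-1:𝕜)^(b+c)) • l2 (l2 y z) (l1 x))) := by
      rw [hl2_rec (b+c) a (by omega) _ (deg_l2 (b+c) b c rfl y hy z hz) x hx,
        chain (b+c) b c rfl y hy z hz]
      simp only [map_add, map_smul, LinearMap.add_apply, LinearMap.smul_apply]
    rw [eA, eB, eC]
    simp only [map_add, map_sub, map_smul, map_neg, smul_neg, smul_add, smul_sub, smul_smul]
    rcases a with _ | a' <;> rcases b with _ | b' <;> rcases c with _ | c'
    · exact absurd h (by omega)
    · rw [hl1_zero x hx, hl1_zero y hy]
      simp only [map_zero, LinearMap.zero_apply, smul_zero, zero_add, add_zero, zero_sub,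
        sub_zero, neg_zero, neg_neg, Nat.add_sub_cancel]
      match_scalars <;> ring_nf <;> simp [h2]
    · rw [hl1_zero x hx, hl1_zero z hz]
      simp only [map_zero, LinearMap.zero_apply, smul_zero, zero_add, add_zero, zero_sub,
        sub_zero, neg_zero, neg_neg, Nat.add_sub_cancel]
      match_scalars <;> ring_nf <;> simp [h2]
    · rw [hl1_zero x hx]
      simp only [map_zero, LinearMap.zero_apply, smul_zero, zero_add, add_zero, zero_sub,
        sub_zero, neg_zero, neg_neg, Nat.add_sub_cancel]
      match_scalars <;> ring_nf <;> simp [h2]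
    · rw [hl1_zero y hy, hl1_zero z hz]
      simp only [map_zero, LinearMap.zero_apply, smul_zero, zero_add, add_zero, zero_sub,
        sub_zero, neg_zero, neg_neg, Nat.add_sub_cancel]
      match_scalars <;> ring_nf <;> simp [h2]
    · rw [hl1_zero y hy]
      simp only [map_zero, LinearMap.zero_apply, smul_zero, zero_add, add_zero, zero_sub,
        sub_zero, neg_zero, neg_neg, Nat.add_sub_cancel]
      match_scalars <;> ring_nf <;> simp [h2]
    · rw [hl1_zero z hz]
      simp only [map_zero, LinearMap.zero_apply, smul_zero, zero_add, add_zero, zero_sub,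
        sub_zero, neg_zero, neg_neg, Nat.add_sub_cancel]
      match_scalars <;> ring_nf <;> simp [h2]
    · simp only [Nat.add_sub_cancel]
      match_scalars <;> ring_nf <;> simp [h2]
  -- the D²=0 cancellation for l3 ∘ l1
  have DD : ∀ a b c, ∀ x ∈ X a, ∀ y ∈ X b, ∀ z ∈ X c,
      (l3 (l1 (l1 x)) y z + ((-1:𝕜)^(a-1)) • l3 (l1 x) (l1 y) z
        + ((-1:𝕜)^((a-1)+b)) • l3 (l1 x) y (l1 z))
      + ((-1:𝕜)^a) • (l3 (l1 x) (l1 y) z + ((-1:𝕜)^a) • l3 x (l1 (l1 y)) z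
        + ((-1:𝕜)^(a+(b-1))) • l3 x (l1 y) (l1 z))
      + ((-1:𝕜)^(a+b)) • (l3 (l1 x) y (l1 z) + ((-1:𝕜)^a) • l3 x (l1 y) (l1 z)
        + ((-1:𝕜)^(a+b)) • l3 x y (l1 (l1 z))) = 0 := by
    intro a b c x hx y hy z hz
    rw [hl1sq x, hl1sq y, hl1sq z]
    simp only [map_zero, LinearMap.zero_apply, smul_zero, zero_add, add_zero]
    rcases a with _ | a' <;> rcases b with _ | b'
    · rw [hl1_zero x hx, hl1_zero y hy]
      simp
    · rw [hl1_zero x hx]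
      simp only [map_zero, LinearMap.zero_apply, smul_zero, zero_add, add_zero,
        Nat.add_sub_cancel]
      match_scalars <;> ring_nf <;> simp [h2]
    · rw [hl1_zero y hy]
      simp only [map_zero, LinearMap.zero_apply, smul_zero, zero_add, add_zero,
        Nat.add_sub_cancel]
      match_scalars <;> ring_nf <;> simp [h2]
    · simp only [Nat.add_sub_cancel]
      match_scalars <;> ring_nf <;> simp [h2]
  -- the abstract recombination lemma
  have key : ∀ (e e' : 𝕜) (w1 w2 w3 u1 v1 t1 u2 v2 t2 u3 v3 t3 : M),
      u1 + v1 + t1 + e • (u2 + v2 + t2) + e' • (u3 + v3 + t3) = 0 →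
      -(s (w1 + e • w2 + e' • w3)) + s (w1 + u1 + v1 + t1) + e • s (w2 + u2 + v2 + t2)
        + e' • s (w3 + u3 + v3 + t3) = 0 := by
    intro e e' w1 w2 w3 u1 v1 t1 u2 v2 t2 u3 v3 t3 hu
    have h1 : -(s (w1 + e • w2 + e' • w3)) + s (w1 + u1 + v1 + t1)
        + e • s (w2 + u2 + v2 + t2) + e' • s (w3 + u3 + v3 + t3)
        = s (u1 + v1 + t1 + e • (u2 + v2 + t2) + e' • (u3 + v3 + t3)) := by
      simp only [map_add, map_smul]
      module
    rw [h1, hu, map_zero]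
  -- main vanishing of the recursion body
  have main : ∀ a b c, 1 ≤ a + b + c → ∀ x ∈ X a, ∀ y ∈ X b, ∀ z ∈ X c,
      l2 (l2 x y) z - ((-1 : 𝕜) ^ (b * c)) • l2 (l2 x z) y
          + ((-1 : 𝕜) ^ (a * (b + c))) • l2 (l2 y z) x
          + l3 (l1 x) y z + ((-1 : 𝕜) ^ a) • l3 x (l1 y) z
          + ((-1 : 𝕜) ^ (a + b)) • l3 x y (l1 z) = 0 := by
    intro a b c h x hx y hy z hz
    have hJ := jac_rec a b c h x hx y hy z hz
    by_cases hn2 : 2 ≤ a + b + c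
    · -- total degree at least 2 : use hl3_rec at shifted degrees
      have e1 : l3 (l1 x) y z = s ((l2 (l2 (l1 x) y) z - ((-1:𝕜)^(b*c)) • l2 (l2 (l1 x) z) y
          + ((-1:𝕜)^((a-1)*(b+c))) • l2 (l2 y z) (l1 x))
          + l3 (l1 (l1 x)) y z + ((-1:𝕜)^(a-1)) • l3 (l1 x) (l1 y) z
          + ((-1:𝕜)^((a-1)+b)) • l3 (l1 x) y (l1 z)) := by
        rcases a with _ | a'
        · rw [hl1_zero x hx]
          simp
        · simp only [Nat.add_sub_cancel]
          exact hl3_rec a' b c (by omega) (l1 x) (hl1_deg a' x hx) y hy z hz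
      have e2 : l3 x (l1 y) z = s ((l2 (l2 x (l1 y)) z - ((-1:𝕜)^((b-1)*c)) • l2 (l2 x z) (l1 y)
          + ((-1:𝕜)^(a*((b-1)+c))) • l2 (l2 (l1 y) z) x)
          + l3 (l1 x) (l1 y) z + ((-1:𝕜)^a) • l3 x (l1 (l1 y)) z
          + ((-1:𝕜)^(a+(b-1))) • l3 x (l1 y) (l1 z)) := by
        rcases b with _ | b'
        · rw [hl1_zero y hy]
          simp
        · simp only [Nat.add_sub_cancel]
          exact hl3_rec a b' c (by omega) x hx (l1 y) (hl1_deg b' y hy) z hz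
      have e3 : l3 x y (l1 z) = s ((l2 (l2 x y) (l1 z) - ((-1:𝕜)^(b*(c-1))) • l2 (l2 x (l1 z)) y
          + ((-1:𝕜)^(a*(b+(c-1)))) • l2 (l2 y (l1 z)) x)
          + l3 (l1 x) y (l1 z) + ((-1:𝕜)^a) • l3 x (l1 y) (l1 z)
          + ((-1:𝕜)^(a+b)) • l3 x y (l1 (l1 z))) := by
        rcases c with _ | c'
        · rw [hl1_zero z hz]
          simp
        · simp only [Nat.add_sub_cancel]
          exact hl3_rec a b c' (by omega) x hx y hy (l1 z) (hl1_deg c' z hz)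
      rw [hJ, e1, e2, e3]
      exact key _ _ _ _ _ _ _ _ _ _ _ _ _ _ (DD a b c x hx y hy z hz)
    · -- total degree exactly 1
      obtain ⟨rfl, rfl, rfl⟩ | ⟨rfl, rfl, rfl⟩ | ⟨rfl, rfl, rfl⟩ :
          (a = 1 ∧ b = 0 ∧ c = 0) ∨ (a = 0 ∧ b = 1 ∧ c = 0) ∨ (a = 0 ∧ b = 0 ∧ c = 1) := by
        omega
      · have hlx : l1 x ∈ X 0 := hl1_deg 0 x hx
        rw [hJ, hl1_zero y hy, hl1_zero z hz]
        simp only [map_zero, LinearMap.zero_apply, smul_zero, add_zero, zero_add, zero_sub,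
          sub_zero, neg_zero, Nat.sub_self, Nat.add_sub_cancel, Nat.zero_sub, Nat.mul_zero,
          Nat.zero_mul, Nat.add_zero, Nat.zero_add, pow_zero, one_smul, Nat.mul_one, Nat.one_mul]
        rw [hl2_base (l1 x) hlx y hy, hl2_base (l1 x) hlx z hz, hl2_base y hy z hz,
          hl2_base _ (hlt2_deg _ hlx y hy) z hz, hl2_base _ (hlt2_deg _ hlx z hz) y hy,
          hl2_base _ (hlt2_deg y hy z hz) _ hlx,
          hl3_base (l1 x) hlx y hy z hz]
        abel
      · have hly : l1 y ∈ X 0 := hl1_deg 0 y hy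
        rw [hJ, hl1_zero x hx, hl1_zero z hz]
        simp only [map_zero, LinearMap.zero_apply, smul_zero, add_zero, zero_add, zero_sub,
          sub_zero, neg_zero, Nat.sub_self, Nat.add_sub_cancel, Nat.zero_sub, Nat.mul_zero,
          Nat.zero_mul, Nat.add_zero, Nat.zero_add, pow_zero, one_smul, Nat.mul_one, Nat.one_mul]
        rw [hl2_base x hx (l1 y) hly, hl2_base x hx z hz, hl2_base (l1 y) hly z hz,
          hl2_base _ (hlt2_deg x hx (l1 y) hly) z hz, hl2_base _ (hlt2_deg x hx z hz) (l1 y) hly,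
          hl2_base _ (hlt2_deg (l1 y) hly z hz) x hx,
          hl3_base x hx (l1 y) hly z hz]
        abel
      · have hlz : l1 z ∈ X 0 := hl1_deg 0 z hz
        rw [hJ, hl1_zero x hx, hl1_zero y hy]
        simp only [map_zero, LinearMap.zero_apply, smul_zero, add_zero, zero_add, zero_sub,
          sub_zero, neg_zero, Nat.sub_self, Nat.add_sub_cancel, Nat.zero_sub, Nat.mul_zero,
          Nat.zero_mul, Nat.add_zero, Nat.zero_add, pow_zero, one_smul, Nat.mul_one, Nat.one_mul]
        rw [hl2_base x hx y hy, hl2_base x hx (l1 z) hlz, hl2_base y hy (l1 z) hlz,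
          hl2_base _ (hlt2_deg x hx y hy) (l1 z) hlz, hl2_base _ (hlt2_deg x hx (l1 z) hlz) y hy,
          hl2_base _ (hlt2_deg y hy (l1 z) hlz) x hx,
          hl3_base x hx y hy (l1 z) hlz]
        abel
  intro a b c h x hx y hy z hz
  rw [hl3_rec a b c h x hx y hy z hz, main a b c h x hx y hy z hz, map_zero]
end

section
/- Assume conditions (i) and (ii): l̃2(x, b) ∈ im(l1) for every x ∈ X_0 and b ∈ im(l1), and the Jacobiator J(x, y, z) := l̃2(l̃2(x, y), z) − l̃2(l̃2(x, z), y) + l̃2(l̃2(y, z), x) lies in im(l1) for all x, y, z ∈ X_0. Define l2 in total degree 1 by l2(f, a) := −s(l̃2(l1 f, a)) for f ∈ X_1, a ∈ X_0, and define l3 : X_0 × X_0 × X_0 → X_1 by l3(x, y, z) := s(J(x, y, z)). Then for all x, y, z, w ∈ X_0: l3(l̃2(x, y), z, w) − l3(l̃2(x, z), y, w) + l3(l̃2(x, w), y, z) + l3(l̃2(y, z), x, w) − l3(l̃2(y, w), x, z) + l3(l̃2(z, w), x, y) − l2(l3(x, y, z), w) + l2(l3(x, y, w), z) − l2(l3(x,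 z, w), y) + l2(l3(y, z, w), x) = 0; that is, the combination l3 l2 − l2 l3 vanishes identically on X_0^{⊗4}, so the sh-Lie structure map l4 may be taken to be zero in degree 0. -/
/-- Under conditions (i) and (ii), with l2(f, a) := -s(l̃2(l1 f, a))
in total degree 1 and l3(x,y,z) := s(J(x,y,z)), the combination l3 l2 - l2 l3
vanishes identically on X 0 ⊗ X 0 ⊗ X 0 ⊗ X 0, so the sh-Lie structure map l4
may be taken to be zero in degree 0. -/
theorem l3l2_minus_l2l3_vanishes_degree_zero
    (𝕜 : Type*) [Field 𝕜]
    (X : ℕ → Type*) [∀ n, AddCommGroup (X n)] [∀ n, Module 𝕜 (X n)]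
    (l1 : ∀ n, X (n + 1) →ₗ[𝕜] X n)
    (hl1sq : ∀ n (x : X (n + 2)), l1 n (l1 (n + 1) x) = 0)
    (s : ∀ n, X n →ₗ[𝕜] X (n + 1))
    (p : X 0 →ₗ[𝕜] X 0)
    (hp_im : ∀ f : X 1, p (l1 0 f) = 0)
    (hps0 : ∀ x : X 0, p x - x = l1 0 (s 0 x))
    (hpsn : ∀ n (x : X (n + 1)), -x = l1 (n + 1) (s (n + 1) x) + s n (l1 n x))
    (lt2 : X 0 →ₗ[𝕜] X 0 →ₗ[𝕜] X 0)
    (hlt2_skew : ∀ a b : X 0, lt2 a b = -lt2 b a)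
    (hcondi : ∀ (x b : X 0), (∃ f : X 1, l1 0 f = b) → ∃ g : X 1, l1 0 g = lt2 x b)
    (hcondii : ∀ x y z : X 0, ∃ f : X 1,
      l1 0 f = lt2 (lt2 x y) z - lt2 (lt2 x z) y + lt2 (lt2 y z) x)
    (l2a : X 1 → X 0 → X 1)
    (hl2a : ∀ (f : X 1) (a : X 0), l2a f a = -(s 0 (lt2 (l1 0 f) a)))
    (l3 : X 0 → X 0 → X 0 → X 1)
    (hl3 : ∀ x y z : X 0,
      l3 x y z = s 0 (lt2 (lt2 x y) z - lt2 (lt2 x z) y + lt2 (lt2 y z) x)) :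
    ∀ x y z w : X 0,
      l3 (lt2 x y) z w - l3 (lt2 x z) y w + l3 (lt2 x w) y z
        + l3 (lt2 y z) x w - l3 (lt2 y w) x z + l3 (lt2 z w) x y
        - l2a (l3 x y z) w + l2a (l3 x y w) z - l2a (l3 x z w) y
        + l2a (l3 y z w) x = 0 := by
  intro x y z w
  have hl1sJ : ∀ a b c : X 0,
      l1 0 (s 0 (lt2 (lt2 a b) c - lt2 (lt2 a c) b + lt2 (lt2 b c) a))
        = -(lt2 (lt2 a b) c - lt2 (lt2 a c) b + lt2 (lt2 b c) a) := by
    intro a b c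
    obtain ⟨f, hf⟩ := hcondii a b c
    have hpJ : p (lt2 (lt2 a b) c - lt2 (lt2 a c) b + lt2 (lt2 b c) a) = 0 := by
      rw [← hf, hp_im]
    have h := hps0 (lt2 (lt2 a b) c - lt2 (lt2 a c) b + lt2 (lt2 b c) a)
    rw [hpJ, zero_sub] at h
    exact h.symm
  have hl2l3 : ∀ a b c d : X 0, l2a (l3 a b c) d
      = s 0 (lt2 (lt2 (lt2 a b) c - lt2 (lt2 a c) b + lt2 (lt2 b c) a) d) := by
    intro a b c d
    rw [hl2a, hl3, hl1sJ, map_neg, LinearMap.neg_apply, map_neg, neg_neg]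
  rw [hl2l3, hl2l3, hl2l3, hl2l3, hl3, hl3, hl3, hl3, hl3, hl3]
  simp only [map_add, map_sub, LinearMap.add_apply, LinearMap.sub_apply]
  rw [hlt2_skew (lt2 z w) (lt2 x y), hlt2_skew (lt2 y w) (lt2 x z),
    hlt2_skew (lt2 y z) (lt2 x w)]
  simp only [map_neg]
  abel
end
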